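/- Let f₁, f₂, f₃, f₄ ∈ ℤ[t] be monic polynomials that are pairwise coprime in ℚ[t]. If |Res(f₁,f₄)| = 1 and |Res(f₂,f₄)| = 1, then there is an isomorphism of ℤ[t]-modules ℤ[t]/(f₁f₃f₄) ⊕ ℤ[t]/(f₂f₃) ≅ ℤ[t]/(f₁f₃) ⊕ ℤ[t]/(f₂f₃f₄). -/

import Mathlib

/-!
Since `f₄` is monic, `|Res(f, f₄)| = 1` means that `f` and `f₄` are coprime already in `ℤ[t]`,
so `p f₁ f₂ + q f₄ = 1` for some `p, q ∈ ℤ[t]`. The matrix `[[q, f₁ p], [-f₂, f₄]]` then has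
determinant `1`, and it and its adjugate act by multiplication as mutually inverse maps between
the two sums of cyclic modules.
-/

/-- The Sylvester-type matrix `A(f,g)` of two integer polynomials: its first
`deg g` columns contain the coefficients of `f, tf, ..., t^{deg g - 1} f` and its last
`deg f` columns contain the coefficients of `g, tg, ..., t^{deg f - 1} g`,
all expressed in the basis `1, t, ..., t^{deg f + deg g - 1}`. -/
noncomputable def sylvesterMatrix (f g : Polynomial ℤ) :
    Matrix (Fin (f.natDegree + g.natDegree)) (Fin (f.natDegree + g.natDegree)) ℤ :=
  Matrix.of fun i j =>
    if (j : ℕ) < g.natDegree then (Polynomial.X ^ (j : ℕ) * f).coeff (i : ℕ)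
    else (Polynomial.X ^ ((j : ℕ) - g.natDegree) * g).coeff (i : ℕ)

/-- The resultant `Res(f,g)` of two integer polynomials, as the determinant of the
Sylvester matrix. -/
noncomputable def res (f g : Polynomial ℤ) : ℤ := (sylvesterMatrix f g).det

open Polynomial

theorem coeff_X_pow_mul_eq_ite {R : Type*} [Semiring R] (p : R[X]) (k i : ℕ) :
    (X ^ k * p).coeff i = if i ∈ Set.Icc k (k + p.natDegree) then p.coeff (i - k) else 0 := by
  rw [coeff_X_pow_mul']
  by_cases hki : k ≤ i
  · by_cases hi : i ≤ k + p.natDegree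
    · simp [hki, hi]
    · simp only [hki, if_true, Set.mem_Icc, hi, and_false, if_false]
      exact coeff_eq_zero_of_natDegree_lt (by omega)
  · simp [hki]

theorem sylvesterMatrix_eq_reindex_sylvester (f g : ℤ[X]) :
    sylvesterMatrix f g = (g.sylvester f g.natDegree f.natDegree).reindex
      (finCongr (add_comm _ _)) (finCongr (add_comm _ _)) := by
  ext i j
  obtain ⟨j, rfl⟩ := (finCongr (add_comm f.natDegree g.natDegree)).symm.surjective j
  refine Fin.addCases (fun j => ?_) (fun j => ?_) j
  · simp [sylvesterMatrix, sylvester, coeff_X_pow_mul_eq_ite]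
    rfl
  · simp [sylvesterMatrix, sylvester, coeff_X_pow_mul_eq_ite]

theorem res_eq_resultant (f g : ℤ[X]) : res f g = g.resultant f := by
  rw [res, sylvesterMatrix_eq_reindex_sylvester, Matrix.det_reindex_self, resultant]

theorem natAbs_res_eq_one_iff_isCoprime {f g : ℤ[X]} (hg : g.Monic) :
    (res f g).natAbs = 1 ↔ IsCoprime f g := by
  rw [← Int.isUnit_iff_natAbs_eq, res_eq_resultant, isUnit_resultant_iff_isCoprime hg,
    isCoprime_comm]

section

variable {R : Type*} [CommRing R]

def mulQuot (r : R) {a b : R} (h : b ∣ r * a) :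
    (R ⧸ Ideal.span {a}) →ₗ[R] R ⧸ Ideal.span {b} :=
  Submodule.mapQ _ _ (LinearMap.lsmul R R r) <| by
    rw [Ideal.span_le, Set.singleton_subset_iff]
    simpa [Ideal.mem_span_singleton] using h

@[simp]
theorem mulQuot_mk (r : R) {a b : R} (h : b ∣ r * a) (x : R) :
    mulQuot r h (Ideal.Quotient.mk _ x) = Ideal.Quotient.mk _ (r * x) :=
  rfl

theorem nonempty_prod_quotient_span_linearEquiv_of_isCoprime {a b c d : R}
    (h : IsCoprime (a * b) d) :
    Nonempty (((R ⧸ Ideal.span {a * c * d}) × (R ⧸ Ideal.span {b * c})) ≃ₗ[R]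
      ((R ⧸ Ideal.span {a * c}) × (R ⧸ Ideal.span {b * c * d}))) := by
  obtain ⟨p, q, hpq⟩ := h
  let Φ : ((R ⧸ Ideal.span {a * c * d}) × (R ⧸ Ideal.span {b * c})) →ₗ[R]
      (R ⧸ Ideal.span {a * c}) × (R ⧸ Ideal.span {b * c * d}) :=
    ((mulQuot q ⟨q * d, by ring⟩ ∘ₗ .fst _ _ _) +
        (mulQuot (a * p) ⟨p * b, by ring⟩ ∘ₗ .snd _ _ _)).prod
      ((mulQuot (-b) ⟨-a, by ring⟩ ∘ₗ .fst _ _ _) + (mulQuot d ⟨1, by ring⟩ ∘ₗ .snd _ _ _))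
  let Ψ : ((R ⧸ Ideal.span {a * c}) × (R ⧸ Ideal.span {b * c * d})) →ₗ[R]
      (R ⧸ Ideal.span {a * c * d}) × (R ⧸ Ideal.span {b * c}) :=
    ((mulQuot d ⟨1, by ring⟩ ∘ₗ .fst _ _ _) +
        (mulQuot (-(a * p)) ⟨-(p * b), by ring⟩ ∘ₗ .snd _ _ _)).prod
      ((mulQuot b ⟨a, by ring⟩ ∘ₗ .fst _ _ _) + (mulQuot q ⟨q * d, by ring⟩ ∘ₗ .snd _ _ _))
  refine ⟨LinearEquiv.ofLinearMap Φ Ψ ?_ ?_⟩ <;>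
  · refine LinearMap.ext fun ⟨x, y⟩ => ?_
    obtain ⟨x, rfl⟩ := Ideal.Quotient.mk_surjective x
    obtain ⟨y, rfl⟩ := Ideal.Quotient.mk_surjective y
    simp only [Φ, Ψ, LinearMap.prod_apply, LinearMap.add_apply, LinearMap.comp_apply,
      LinearMap.fst_apply, LinearMap.snd_apply, Function.prod, mulQuot_mk, ← map_add,
      LinearMap.id_apply]
    refine Prod.ext (congrArg (Ideal.Quotient.mk _) ?_) (congrArg (Ideal.Quotient.mk _) ?_)
    · linear_combination x * hpq
    · linear_combination y * hpq

end

theorem sum_companion_iso_of_resultants_general (f₁ f₂ f₃ f₄ : Polynomial ℤ)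
    (h₄ : f₄.Monic)
    (hr14 : (res f₁ f₄).natAbs = 1) (hr24 : (res f₂ f₄).natAbs = 1) :
    Nonempty (((Polynomial ℤ ⧸ Ideal.span {f₁ * f₃ * f₄}) ×
          (Polynomial ℤ ⧸ Ideal.span {f₂ * f₃})) ≃ₗ[Polynomial ℤ]
        ((Polynomial ℤ ⧸ Ideal.span {f₁ * f₃}) ×
          (Polynomial ℤ ⧸ Ideal.span {f₂ * f₃ * f₄}))) := by
  have hc₁ : IsCoprime f₁ f₄ := (natAbs_res_eq_one_iff_isCoprime h₄).1 hr14
  have hc₂ : IsCoprime f₂ f₄ := (natAbs_res_eq_one_iff_isCoprime h₄).1 hr24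
  exact nonempty_prod_quotient_span_linearEquiv_of_isCoprime (hc₁.mul_left hc₂)

/-- Theorem 5.1 (b), sufficiency: for monic `f₁, f₂, f₃, f₄ ∈ ℤ[t]`, pairwise coprime in
`ℚ[t]`, if `|Res(f₁,f₄)| = 1` and `|Res(f₂,f₄)| = 1` then
`ℤ[t]/(f₁f₃f₄) ⊕ ℤ[t]/(f₂f₃) ≅ ℤ[t]/(f₁f₃) ⊕ ℤ[t]/(f₂f₃f₄)` as `ℤ[t]`-modules. -/
theorem sum_companion_iso_of_resultants (f₁ f₂ f₃ f₄ : Polynomial ℤ)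
    (h₁ : f₁.Monic) (h₂ : f₂.Monic) (h₃ : f₃.Monic) (h₄ : f₄.Monic)
    (h12 : IsCoprime (f₁.map (Int.castRingHom ℚ)) (f₂.map (Int.castRingHom ℚ)))
    (h13 : IsCoprime (f₁.map (Int.castRingHom ℚ)) (f₃.map (Int.castRingHom ℚ)))
    (h14 : IsCoprime (f₁.map (Int.castRingHom ℚ)) (f₄.map (Int.castRingHom ℚ)))
    (h23 : IsCoprime (f₂.map (Int.castRingHom ℚ)) (f₃.map (Int.castRingHom ℚ)))
    (h24 : IsCoprime (f₂.map (Int.castRingHom ℚ)) (f₄.map (Int.castRingHom ℚ)))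
    (h34 : IsCoprime (f₃.map (Int.castRingHom ℚ)) (f₄.map (Int.castRingHom ℚ)))
    (hr14 : (res f₁ f₄).natAbs = 1) (hr24 : (res f₂ f₄).natAbs = 1) :
    Nonempty (((Polynomial ℤ ⧸ Ideal.span {f₁ * f₃ * f₄}) ×
          (Polynomial ℤ ⧸ Ideal.span {f₂ * f₃})) ≃ₗ[Polynomial ℤ]
        ((Polynomial ℤ ⧸ Ideal.span {f₁ * f₃}) ×
          (Polynomial ℤ ⧸ Ideal.span {f₂ * f₃ * f₄}))) :=
  sum_companion_iso_of_resultants_general f₁ f₂ f₃ f₄ h₄ hr14 hr24
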